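/- Let ρ be a density matrix on ℂ^d and let Ψ and Φ be quantum channels on ℂ^d with Kraus operators {L_i}_{i=1}^n and {K_i}_{i=1}^n indexed by the same finite set. Then Q_ρ(Ψ)² + Q_ρ(Φ)² ≥ (1/2) Σ_{i,j} | ⟨[√ρ, L_i], [√ρ, K_i]⟩ · ( ⟨{√ρ, L_j}, {√ρ, K_j}⟩ − 4 · conj(tr(L_j ρ)) · tr(K_j ρ) ) |, where ⟨A, B⟩ = tr(A† B), [A,B] = AB − BA and {A,B} = AB + BA. -/

import Mathlib

open Matrix
open scoped ComplexOrder

noncomputable section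

/-- The positive semidefinite square root of a positive semidefinite matrix
(the definition `Matrix.PosSemidef.sqrt` of the older Mathlib, removed since). -/
def Matrix.PosSemidef.sqrt {n 𝕜 : Type*} [Fintype n] [DecidableEq n] [RCLike 𝕜]
    {A : Matrix n n 𝕜} (hA : A.PosSemidef) : Matrix n n 𝕜 :=
  (hA.1.eigenvectorUnitary : Matrix n n 𝕜) *
    diagonal ((RCLike.ofReal : ℝ → 𝕜) ∘ Real.sqrt ∘ hA.1.eigenvalues) *
    (star hA.1.eigenvectorUnitary : Matrix n n 𝕜)

/-- Variance of an operator `K` with respect to a state `ρ`: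
`V_ρ(K) = ½ tr((K†K + KK†)ρ) − |tr(Kρ)|²`. -/
def opVar {d : ℕ} (ρ K : Matrix (Fin d) (Fin d) ℂ) : ℝ :=
  (((Kᴴ * K + K * Kᴴ) * ρ).trace).re / 2 - ‖(K * ρ).trace‖ ^ 2

/-- Variance of a channel with Kraus operators `K i`: `V_ρ(Φ) = Σ_i V_ρ(K_i)`. -/
def chanVar {d n : ℕ} (ρ : Matrix (Fin d) (Fin d) ℂ)
    (K : Fin n → Matrix (Fin d) (Fin d) ℂ) : ℝ :=
  ∑ i, opVar ρ (K i)

/-- Wigner–Yanase skew information of a channel with Kraus operators `K i`: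
`I_ρ(Φ) = ½ Σ_i ‖[√ρ, K_i]‖_F²`, where `√ρ` is the PSD square root of `ρ`. -/
def chanSkew {d n : ℕ} (ρ : Matrix (Fin d) (Fin d) ℂ) (hρ : ρ.PosSemidef)
    (K : Fin n → Matrix (Fin d) (Fin d) ℂ) : ℝ :=
  (1 / 2) * ∑ i,
    (((hρ.sqrt * K i - K i * hρ.sqrt)ᴴ * (hρ.sqrt * K i - K i * hρ.sqrt)).trace).re

/-- Quantum uncertainty of a channel:
`Q_ρ(Φ) = √(V_ρ(Φ)² − (V_ρ(Φ) − I_ρ(Φ))²)`. -/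
def chanQ {d n : ℕ} (ρ : Matrix (Fin d) (Fin d) ℂ) (hρ : ρ.PosSemidef)
    (K : Fin n → Matrix (Fin d) (Fin d) ℂ) : ℝ :=
  Real.sqrt ((chanVar ρ K) ^ 2 - (chanVar ρ K - chanSkew ρ hρ K) ^ 2)

/-! With `s = √ρ` and `X₀ = X - tr(Xρ) • 1`, the variance splits as
`V_ρ(X) = (‖[s, X]‖² + ‖{s, X₀}‖²) / 4`, while `I_ρ(Φ) = ½ Σ ‖[s, K_i]‖²`; hence
`Q_ρ(Φ)² = I (2V - I) = ¼ (Σ ‖[s, K_i]‖²) (Σ ‖{s, K_i₀}‖²)`. Since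
`⟨{s, L₀}, {s, K₀}⟩ = ⟨{s, L}, {s, K}⟩ - 4 conj(tr(Lρ)) tr(Kρ)`, the right-hand side is
`½ (Σ_i |⟨[s, L_i], [s, K_i]⟩|) (Σ_j |⟨{s, L_j₀}, {s, K_j₀}⟩|)`. Cauchy–Schwarz, termwise and
then over the sum, bounds it by `½ √(ab) √(cd) = ½ √(ac) √(bd)`, where `a, b` are the commutator
sums and `c, d` the anticommutator sums of `Ψ` and `Φ`, and AM–GM by `¼ (ac + bd)`. -/

open scoped InnerProductSpace

theorem sum_norm_inner_le_sqrt_mul_sqrt {𝕜 ι E : Type*} [RCLike 𝕜] [NormedAddCommGroup E]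
    [InnerProductSpace 𝕜 E] (s : Finset ι) (u v : ι → E) :
    ∑ i ∈ s, ‖⟪u i, v i⟫_𝕜‖ ≤ √(∑ i ∈ s, ‖u i‖ ^ 2) * √(∑ i ∈ s, ‖v i‖ ^ 2) :=
  (Finset.sum_le_sum fun i _ ↦ norm_inner_le_norm (u i) (v i)).trans
    (Real.sum_mul_le_sqrt_mul_sqrt s _ _)

theorem sum_sum_norm_inner_mul_inner_le {𝕜 ι E : Type*} [RCLike 𝕜] [NormedAddCommGroup E]
    [InnerProductSpace 𝕜 E] (s : Finset ι) (u v w z : ι → E) :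
    ∑ i ∈ s, ∑ j ∈ s, ‖⟪u i, v i⟫_𝕜 * ⟪w j, z j⟫_𝕜‖ ≤
      ((∑ i ∈ s, ‖u i‖ ^ 2) * (∑ i ∈ s, ‖w i‖ ^ 2) +
        (∑ i ∈ s, ‖v i‖ ^ 2) * (∑ i ∈ s, ‖z i‖ ^ 2)) / 2 := by
  set U := ∑ i ∈ s, ‖u i‖ ^ 2
  set V := ∑ i ∈ s, ‖v i‖ ^ 2
  set W := ∑ i ∈ s, ‖w i‖ ^ 2
  set Z := ∑ i ∈ s, ‖z i‖ ^ 2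
  have hUW : 0 ≤ U * W := by positivity
  have hVZ : 0 ≤ V * Z := by positivity
  calc ∑ i ∈ s, ∑ j ∈ s, ‖⟪u i, v i⟫_𝕜 * ⟪w j, z j⟫_𝕜‖
      = (∑ i ∈ s, ‖⟪u i, v i⟫_𝕜‖) * ∑ j ∈ s, ‖⟪w j, z j⟫_𝕜‖ := by
        simp only [norm_mul, Finset.sum_mul_sum]
    _ ≤ (√U * √V) * (√W * √Z) :=
        mul_le_mul (sum_norm_inner_le_sqrt_mul_sqrt s u v) (sum_norm_inner_le_sqrt_mul_sqrt s w z)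
          (by positivity) (by positivity)
    _ = √(U * W) * √(V * Z) := by
        rw [Real.sqrt_mul (by positivity), Real.sqrt_mul (by positivity)]
        ring
    _ ≤ (U * W + V * Z) / 2 := by
        nlinarith [two_mul_le_add_sq √(U * W) √(V * Z), Real.sq_sqrt hUW, Real.sq_sqrt hVZ]

namespace Matrix

section Sqrt

variable {m 𝕜 : Type*} [Fintype m] [DecidableEq m] [RCLike 𝕜] {A : Matrix m m 𝕜}

theorem PosSemidef.conjTranspose_sqrt (hA : A.PosSemidef) : hA.sqrtᴴ = hA.sqrt := by
  simp only [PosSemidef.sqrt, conjTranspose_mul, diagonal_conjTranspose, star_eq_conjTranspose,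
    conjTranspose_conjTranspose, Matrix.mul_assoc]
  congr 3
  funext i
  simp

theorem PosSemidef.sqrt_mul_sqrt (hA : A.PosSemidef) : hA.sqrt * hA.sqrt = A := by
  set U := (hA.1.eigenvectorUnitary : Matrix m m 𝕜)
  set D := diagonal ((RCLike.ofReal : ℝ → 𝕜) ∘ Real.sqrt ∘ hA.1.eigenvalues)
  have hU : star U * U = 1 := Unitary.coe_star_mul_self _
  have hD : D * D = diagonal ((RCLike.ofReal : ℝ → 𝕜) ∘ hA.1.eigenvalues) := by
    rw [diagonal_mul_diagonal]
    congr 1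
    funext i
    simp [← RCLike.ofReal_mul, Real.mul_self_sqrt (hA.eigenvalues_nonneg i)]
  calc hA.sqrt * hA.sqrt = U * (D * (star U * U) * D) * star U := by
        simp only [PosSemidef.sqrt, U, D, Matrix.mul_assoc]
    _ = A := by
        rw [hU, Matrix.mul_one, hD]
        exact hA.1.spectral_theorem.symm

end Sqrt

section FrobeniusInner

variable {m n 𝕜 : Type*} [Fintype m] [Fintype n] [RCLike 𝕜]

def frobeniusVec (A : Matrix m n 𝕜) : EuclideanSpace 𝕜 (n × m) := WithLp.toLp 2 A.vec

theorem inner_frobeniusVec (A B : Matrix m n 𝕜) :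
    ⟪frobeniusVec A, frobeniusVec B⟫_𝕜 = (Aᴴ * B).trace := by
  rw [frobeniusVec, frobeniusVec, EuclideanSpace.inner_toLp_toLp, dotProduct_comm,
    star_vec_dotProduct_vec]

theorem norm_frobeniusVec_sq (A : Matrix m n 𝕜) :
    ‖frobeniusVec A‖ ^ 2 = RCLike.re (Aᴴ * A).trace := by
  rw [← inner_frobeniusVec, inner_self_eq_norm_sq]

end FrobeniusInner

section Anticommutator

variable {m 𝕜 : Type*} [Fintype m] [RCLike 𝕜] {s ρ : Matrix m m 𝕜}

/-- `{s, X - tr(Xρ) • 1}`, the anticommutator of `s` with `X` centred at its mean. -/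
def centredAnticomm (s ρ X : Matrix m m 𝕜) : Matrix m m 𝕜 :=
  s * X + X * s - (2 * (X * ρ).trace) • s

theorem trace_mul_anticomm (hsρ : s * s = ρ) (X : Matrix m m 𝕜) :
    (s * (s * X + X * s)).trace = 2 * (X * ρ).trace := by
  rw [Matrix.mul_add, trace_add, ← Matrix.mul_assoc, hsρ, ← Matrix.mul_assoc,
    trace_mul_cycle s X s, hsρ, trace_mul_comm ρ X, two_mul]

theorem trace_conjTranspose_mul_self_comm_add_anticomm (hs : sᴴ = s)
    (hsρ : s * s = ρ) (X : Matrix m m 𝕜) :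
    ((s * X - X * s)ᴴ * (s * X - X * s)).trace + ((s * X + X * s)ᴴ * (s * X + X * s)).trace =
      2 * ((Xᴴ * X + X * Xᴴ) * ρ).trace := by
  have h : (s * X - X * s)ᴴ * (s * X - X * s) + (s * X + X * s)ᴴ * (s * X + X * s) =
      2 • (Xᴴ * (s * s) * X + s * (Xᴴ * X) * s) := by
    simp only [conjTranspose_sub, conjTranspose_add, conjTranspose_mul, hs]
    noncomm_ring
  rw [← trace_add, h, trace_smul, trace_add, trace_mul_cycle, trace_mul_cycle s, hsρ,
    Matrix.add_mul, trace_add, trace_mul_comm (Xᴴ * X), nsmul_eq_mul, Nat.cast_ofNat, add_comm]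

theorem trace_conjTranspose_centredAnticomm_mul (hs : sᴴ = s) (hsρ : s * s = ρ)
    (htr : ρ.trace = 1) (L K : Matrix m m 𝕜) :
    ((centredAnticomm s ρ L)ᴴ * centredAnticomm s ρ K).trace =
      ((s * L + L * s)ᴴ * (s * K + K * s)).trace -
        4 * starRingEnd 𝕜 (L * ρ).trace * (K * ρ).trace := by
  have hL : ((s * L + L * s)ᴴ * s).trace = 2 * starRingEnd 𝕜 (L * ρ).trace := by
    rw [← hs, ← conjTranspose_mul, trace_conjTranspose, hs, trace_mul_anticomm hsρ,
      star_mul', star_ofNat, RCLike.star_def]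
  have hss : (s * s).trace = 1 := by rw [hsρ, htr]
  simp only [centredAnticomm, conjTranspose_sub, conjTranspose_smul, hs, Matrix.sub_mul,
    Matrix.mul_sub, Matrix.smul_mul, Matrix.mul_smul, trace_sub, trace_smul, smul_eq_mul,
    trace_mul_anticomm hsρ, hL, hss, star_mul', star_ofNat, RCLike.star_def]
  ring

end Anticommutator

end Matrix

section ChannelUncertainty

variable {d : ℕ} {ρ s : Matrix (Fin d) (Fin d) ℂ}

theorem opVar_eq_norm_frobeniusVec (hs : sᴴ = s) (hsρ : s * s = ρ) (htr : ρ.trace = 1)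
    (X : Matrix (Fin d) (Fin d) ℂ) :
    opVar ρ X = (‖frobeniusVec (s * X - X * s)‖ ^ 2 +
      ‖frobeniusVec (centredAnticomm s ρ X)‖ ^ 2) / 4 := by
  have hsum := congrArg RCLike.re (trace_conjTranspose_mul_self_comm_add_anticomm hs hsρ X)
  have hcentred := congrArg RCLike.re
    (trace_conjTranspose_centredAnticomm_mul hs hsρ htr X X)
  rw [mul_assoc, RCLike.conj_mul] at hcentred
  simp only [map_add, map_sub, RCLike.ofNat_mul_re, ← RCLike.ofReal_pow, RCLike.ofReal_re]
    at hsum hcentred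
  simp only [opVar, norm_frobeniusVec_sq]
  simp only [RCLike.re_to_complex] at hsum hcentred ⊢
  linarith

theorem chanSkew_eq_norm_frobeniusVec {n : ℕ} (hρ : ρ.PosSemidef)
    (X : Fin n → Matrix (Fin d) (Fin d) ℂ) :
    chanSkew ρ hρ X = (∑ i, ‖frobeniusVec (hρ.sqrt * X i - X i * hρ.sqrt)‖ ^ 2) / 2 := by
  simp only [chanSkew, norm_frobeniusVec_sq, RCLike.re_to_complex]
  ring

theorem chanQ_sq_eq {n : ℕ} (hρ : ρ.PosSemidef) (htr : ρ.trace = 1)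
    (X : Fin n → Matrix (Fin d) (Fin d) ℂ) :
    chanQ ρ hρ X ^ 2 =
      (∑ i, ‖frobeniusVec (hρ.sqrt * X i - X i * hρ.sqrt)‖ ^ 2) *
        (∑ i, ‖frobeniusVec (centredAnticomm hρ.sqrt ρ (X i))‖ ^ 2) / 4 := by
  set C := ∑ i, ‖frobeniusVec (hρ.sqrt * X i - X i * hρ.sqrt)‖ ^ 2
  set A := ∑ i, ‖frobeniusVec (centredAnticomm hρ.sqrt ρ (X i))‖ ^ 2
  have hvar : chanVar ρ X = (C + A) / 4 := by
    simp only [chanVar, opVar_eq_norm_frobeniusVec hρ.conjTranspose_sqrt hρ.sqrt_mul_sqrt htr,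
      C, A, ← Finset.sum_div, Finset.sum_add_distrib]
  have hC : 0 ≤ C := by positivity
  have hA : 0 ≤ A := by positivity
  rw [chanQ, hvar, chanSkew_eq_norm_frobeniusVec, Real.sq_sqrt (by nlinarith)]
  ring

end ChannelUncertainty

theorem stmt_2_general {d n : ℕ}
    (ρ : Matrix (Fin d) (Fin d) ℂ) (hρ : ρ.PosSemidef) (htr : ρ.trace = 1)
    (L : Fin n → Matrix (Fin d) (Fin d) ℂ)
    (K : Fin n → Matrix (Fin d) (Fin d) ℂ) :
    chanQ ρ hρ L ^ 2 + chanQ ρ hρ K ^ 2 ≥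
      (1 / 2) * ∑ i, ∑ j,
        ‖(((hρ.sqrt * L i - L i * hρ.sqrt)ᴴ * (hρ.sqrt * K i - K i * hρ.sqrt)).trace *
            (((hρ.sqrt * L j + L j * hρ.sqrt)ᴴ * (hρ.sqrt * K j + K j * hρ.sqrt)).trace -
              4 * (starRingEnd ℂ) ((L j * ρ).trace) * ((K j * ρ).trace)))‖ := by
  simp only [← trace_conjTranspose_centredAnticomm_mul hρ.conjTranspose_sqrt hρ.sqrt_mul_sqrt htr]
  simp only [← inner_frobeniusVec (𝕜 := ℂ)]
  have key := sum_sum_norm_inner_mul_inner_le (𝕜 := ℂ) Finset.univ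
    (fun i ↦ frobeniusVec (hρ.sqrt * L i - L i * hρ.sqrt))
    (fun i ↦ frobeniusVec (hρ.sqrt * K i - K i * hρ.sqrt))
    (fun i ↦ frobeniusVec (centredAnticomm hρ.sqrt ρ (L i)))
    (fun i ↦ frobeniusVec (centredAnticomm hρ.sqrt ρ (K i)))
  rw [ge_iff_le, chanQ_sq_eq hρ htr, chanQ_sq_eq hρ htr]
  linarith

/-- Summation-form uncertainty relation for two quantum channels (Theorem 2). -/
theorem stmt_2 {d n : ℕ}
    (ρ : Matrix (Fin d) (Fin d) ℂ) (hρ : ρ.PosSemidef) (htr : ρ.trace = 1)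
    (L : Fin n → Matrix (Fin d) (Fin d) ℂ) (hL : ∑ i, (L i)ᴴ * L i = 1)
    (K : Fin n → Matrix (Fin d) (Fin d) ℂ) (hK : ∑ i, (K i)ᴴ * K i = 1) :
    chanQ ρ hρ L ^ 2 + chanQ ρ hρ K ^ 2 ≥
      (1 / 2) * ∑ i, ∑ j,
        ‖(((hρ.sqrt * L i - L i * hρ.sqrt)ᴴ * (hρ.sqrt * K i - K i * hρ.sqrt)).trace *
            (((hρ.sqrt * L j + L j * hρ.sqrt)ᴴ * (hρ.sqrt * K j + K j * hρ.sqrt)).trace -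
              4 * (starRingEnd ℂ) ((L j * ρ).trace) * ((K j * ρ).trace)))‖ :=
  stmt_2_general ρ hρ htr L K
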